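/- Suppose (I,<) forms a set of tight indiscernibles generating M* over M. For each S ⊆ I let M_S be the elementary submodel of M* generated by M ∪ S. Then M_{S₀} ≼ M_{S₁} whenever S₀ ⊆ S₁ ⊆ I, and if S₀ and S₁ are disjoint subsets of I then M_{S₀} ∩ M_{S₁} = M. -/

import Mathlib

open FirstOrder Language

/-- `f : N^k → N` is parametrically definable (over the parameter set `A`). -/
def ParamDefFun (L : Language) {N : Type*} [L.Structure N] (A : Set N) (k : ℕ)
    (f : (Fin k → N) → N) : Prop :=
  Set.Definable A L {x : Fin (k + 1) → N | x (Fin.last k) = f (fun i => x i.castSucc)}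

/-- `(ι,<)`, presented by `e : ι → N`, is a set of order indiscernibles over the
parameter set `A`: any two increasing tuples satisfy the same formulas with
parameters from `A`. -/
def OrderIndisc (L : Language) {N : Type*} [L.Structure N] (A : Set N)
    {ι : Type*} [LinearOrder ι] (e : ι → N) : Prop :=
  ∀ (k : ℕ) (φ : (L[[↥A]]).Formula (Fin k)) (i j : Fin k → ι),
    StrictMono i → StrictMono j → (φ.Realize (e ∘ i) ↔ φ.Realize (e ∘ j))

/-- Property (2) of tight indiscernibles: `N` is generated over `A` by the image of `e`,
via parametrically `A`-definable functions applied to increasing tuples. -/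
def GeneratedBy (L : Language) {N : Type*} [L.Structure N] (A : Set N)
    {ι : Type*} [LinearOrder ι] (e : ι → N) : Prop :=
  ∀ a : N, ∃ (k : ℕ) (f : (Fin k → N) → N), ParamDefFun L A k f ∧
    ∃ i : Fin k → ι, StrictMono i ∧ f (e ∘ i) = a

/-- Property (3) of tight indiscernibles: if a parametrically `A`-definable function takes
the same value at two increasing tuples, the second lying entirely above the first, then
that common value lies in `A`. -/
def TightProp (L : Language) {N : Type*} [L.Structure N] (A : Set N)
    {ι : Type*} [LinearOrder ι] (e : ι → N) : Prop :=
  ∀ (k : ℕ) (f : (Fin k → N) → N), ParamDefFun L A k f →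
    ∀ i j : Fin k → ι, StrictMono i → StrictMono j → (∀ a b, i a < j b) →
      f (e ∘ i) = f (e ∘ j) → f (e ∘ i) ∈ A

/-- `A` has definable Skolem functions (realized in `N`). -/
def HasDefSkolem (L : Language) {N : Type*} [L.Structure N] (A : Set N) : Prop :=
  ∀ (n : ℕ) (φ : (L[[↥A]]).Formula (Fin (n + 1))), ∃ f : (Fin n → N) → N,
    ParamDefFun L A n f ∧
      ∀ x : Fin n → N, (∃ b, φ.Realize (Fin.snoc x b)) → φ.Realize (Fin.snoc x (f x))


/-- The submodel of `N` generated by `A` together with `{e i : i ∈ T}`: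
all values of parametrically `A`-definable functions at increasing tuples from `T`,
together with `A`. -/
def genSet (L : Language) {N : Type*} [L.Structure N] (A : Set N)
    {ι : Type*} [LinearOrder ι] (e : ι → N) (T : Set ι) : Set N :=
  A ∪ {a | ∃ (k : ℕ) (f : (Fin k → N) → N), ParamDefFun L A k f ∧
    ∃ i : Fin k → ι, StrictMono i ∧ (∀ t, i t ∈ T) ∧ f (e ∘ i) = a}

/-!
The Tarski–Vaught condition holds because `M_S` is closed under `M`-definable functions, in
particular under the definable Skolem functions.

For the intersection, let `a = f(ī) = g(j̄)` with `ī ⊆ S₀`, `j̄ ⊆ S₁`, and place both tuples inside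
one increasing tuple `w̄`, so that `f` and `g` read disjoint sets of its coordinates. By
indiscernibility `f = g` on every increasing tuple, so `f` does not change when a single coordinate
is moved: coordinates not read by `f` are free, and those read by `f` are not read by `g`. Moving
the coordinates one at a time, from the top down, from a block `ū` to a block `v̄ > ū` shows
`f(ū) = f(v̄)`; by tightness this value lies in `M`, and by indiscernibility it equals `f(w̄) = a`.
-/

section Definability

variable {L : Language} {N : Type*} [L.Structure N] {A : Set N}

lemma paramDefFun_iff_definableFun {k : ℕ} {f : (Fin k → N) → N} :
    ParamDefFun L A k f ↔ A.DefinableFun L f := by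
  unfold ParamDefFun Set.DefinableFun
  constructor
  · intro h
    convert h.preimage_comp (finSuccEquivLast (n := k)) using 1
    ext v
    simp [Function.tupleGraph, eq_comm, Function.comp_def]
  · intro h
    convert h.preimage_comp (finSuccEquivLast (n := k)).symm using 1
    ext v
    simp [Function.tupleGraph, eq_comm, Function.comp_def]

lemma ParamDefFun.const {c : N} (hc : c ∈ A) (n : ℕ) : ParamDefFun L A n (fun _ => c) :=
  paramDefFun_iff_definableFun.2 (L.definableFun_const _ hc)

lemma ParamDefFun.comp {m n : ℕ} {g : (Fin m → N) → N} (hg : ParamDefFun L A m g)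
    {h : Fin m → (Fin n → N) → N} (hh : ∀ t, ParamDefFun L A n (h t)) :
    ParamDefFun L A n (fun y => g fun t => h t y) := by
  simp only [paramDefFun_iff_definableFun] at *
  exact hg.comp hh

lemma ParamDefFun.comp_reindex {k n : ℕ} {f : (Fin k → N) → N} (hf : ParamDefFun L A k f)
    (p : Fin k → Fin n) : ParamDefFun L A n (fun y => f (y ∘ p)) :=
  hf.comp fun _ => paramDefFun_iff_definableFun.2 (.proj L)

lemma ParamDefFun.definable_setOf_eq {n : ℕ} {f₁ f₂ : (Fin n → N) → N}
    (h₁ : ParamDefFun L A n f₁) (h₂ : ParamDefFun L A n f₂) :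
    A.Definable L {y : Fin n → N | f₁ y = f₂ y} :=
  (paramDefFun_iff_definableFun.1 h₁).ofPred_eq (paramDefFun_iff_definableFun.1 h₂)

end Definability

section Indiscernibles

variable {ι : Type*} [LinearOrder ι]

variable (ι) in
lemma Infinite.exists_strictMono_fin [Infinite ι] (m : ℕ) : ∃ z : Fin m → ι, StrictMono z := by
  obtain ⟨s, hs⟩ := Infinite.exists_subset_card_eq ι m
  exact ⟨s.orderEmbOfFin hs, (s.orderEmbOfFin hs).strictMono⟩

lemma Finset.exists_orderEmbOfFin_comp_eq {F : Finset ι} {n : ℕ} (h : F.card = n) {k : ℕ}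
    {i : Fin k → ι} (hi : ∀ r, i r ∈ F) : ∃ p : Fin k → Fin n, F.orderEmbOfFin h ∘ p = i := by
  have hex : ∀ r, ∃ u, F.orderEmbOfFin h u = i r := fun r => by
    rw [← Set.mem_range, Finset.range_orderEmbOfFin]
    exact hi r
  choose p hp using hex
  exact ⟨p, funext hp⟩

lemma apply_castAdd_eq_apply_natAdd {X : Type*} {n k l : ℕ} {p : Fin k → Fin n}
    {q : Fin l → Fin n} (hpq : ∀ r r', p r ≠ q r') {Φ : (Fin k → ι) → X} {Ψ : (Fin l → ι) → X}
    (h : ∀ u : Fin n → ι, StrictMono u → Φ (u ∘ p) = Ψ (u ∘ q)) {z : Fin (n + n) → ι}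
    (hz : StrictMono z) : Φ ((z ∘ Fin.castAdd n) ∘ p) = Φ ((z ∘ Fin.natAdd n) ∘ p) := by
  -- `C M` has its top `M` coordinates in the upper half and the others in the lower half
  let C : ℕ → Fin n → ι := fun M t => z (if (t : ℕ) < n - M then t.castAdd n else t.natAdd n)
  have hC : ∀ M, StrictMono (C M) := fun M t t' htt => hz <| by
    have : (t : ℕ) < t' := htt
    split_ifs <;> simp only [Fin.lt_def, Fin.val_castAdd, Fin.val_natAdd] <;> omega
  have hstep : ∀ M < n, Φ (C M ∘ p) = Φ (C (M + 1) ∘ p) := by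
    intro M hM
    have hagree : ∀ t : Fin n, (t : ℕ) ≠ n - M - 1 → C M t = C (M + 1) t := by
      intro t ht
      simp only [C]
      congr 1
      split_ifs <;> first | rfl | omega
    by_cases hmoved : ∃ r, (p r : ℕ) = n - M - 1
    · obtain ⟨r₀, hr₀⟩ := hmoved
      have hq : C M ∘ q = C (M + 1) ∘ q := funext fun r =>
        hagree _ fun hr => hpq r₀ r (Fin.ext (hr₀.trans hr.symm))
      rw [h _ (hC M), h _ (hC (M + 1)), hq]
    · push Not at hmoved
      congr 1
      exact funext fun r => hagree _ (hmoved r)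
  have hslide : ∀ M ≤ n, Φ (C 0 ∘ p) = Φ (C M ∘ p) := by
    intro M
    induction M with
    | zero => exact fun _ => rfl
    | succ M ih => exact fun hM => (ih (by omega)).trans (hstep M hM)
  have hC₀ : z ∘ Fin.castAdd n = C 0 := funext fun t => by simp [C]
  have hCₙ : z ∘ Fin.natAdd n = C n := funext fun t => by simp [C]
  rw [hC₀, hCₙ]
  exact hslide n le_rfl

variable {L : Language} {N : Type*} [L.Structure N] {A : Set N} {e : ι → N}

lemma OrderIndisc.mem_iff_mem (hind : OrderIndisc L A e) {n : ℕ} {s : Set (Fin n → N)}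
    (hs : A.Definable L s) {i j : Fin n → ι} (hi : StrictMono i) (hj : StrictMono j) :
    e ∘ i ∈ s ↔ e ∘ j ∈ s := by
  obtain ⟨φ, rfl⟩ := hs
  exact hind n φ i j hi hj

lemma OrderIndisc.apply_mem_of_tight (hind : OrderIndisc L A e) (htight : TightProp L A e)
    {n : ℕ} {H : (Fin n → N) → N} (hH : ParamDefFun L A n H) {u v w : Fin n → ι}
    (hu : StrictMono u) (hv : StrictMono v) (hw : StrictMono w) (huv : ∀ a b, u a < v b)
    (heq : H (e ∘ u) = H (e ∘ v)) : H (e ∘ w) ∈ A := by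
  have hc : H (e ∘ u) ∈ A := htight n H hH u v hu hv huv heq
  have hwu : H (e ∘ w) = H (e ∘ u) :=
    (hind.mem_iff_mem (hH.definable_setOf_eq (.const hc n)) hw hu).2 rfl
  exact hwu ▸ hc

end Indiscernibles

section GeneratedSubmodel

variable {L : Language} {N : Type*} [L.Structure N] {A : Set N}
  {ι : Type*} [LinearOrder ι] {e : ι → N}

lemma exists_of_mem_genSet {T : Set ι} {a : N} (ha : a ∈ genSet L A e T) :
    ∃ (k : ℕ) (f : (Fin k → N) → N), ParamDefFun L A k f ∧
      ∃ i : Fin k → ι, StrictMono i ∧ (∀ t, i t ∈ T) ∧ f (e ∘ i) = a := by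
  rcases ha with ha | ha
  · exact ⟨0, fun _ => a, .const ha 0, Fin.elim0, fun t => t.elim0, fun t => t.elim0, rfl⟩
  · exact ha

lemma genSet_mono {T₀ T₁ : Set ι} (h : T₀ ⊆ T₁) : genSet L A e T₀ ⊆ genSet L A e T₁ := by
  rintro a (ha | ⟨k, f, hf, i, hi, hiT, rfl⟩)
  · exact Or.inl ha
  · exact Or.inr ⟨k, f, hf, i, hi, fun t => h (hiT t), rfl⟩

lemma ParamDefFun.mem_genSet {T : Set ι} {m : ℕ} {g : (Fin m → N) → N}
    (hg : ParamDefFun L A m g) {x : Fin m → N} (hx : ∀ t, x t ∈ genSet L A e T) :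
    g x ∈ genSet L A e T := by
  classical
  choose k f hf i _ hiT hfx using fun t => exists_of_mem_genSet (hx t)
  let F : Finset ι := Finset.univ.biUnion fun t => Finset.univ.image (i t)
  let w := F.orderEmbOfFin rfl
  have hp : ∀ t, ∃ p, w ∘ p = i t := fun t =>
    F.exists_orderEmbOfFin_comp_eq rfl fun r =>
      Finset.mem_biUnion.2 ⟨t, Finset.mem_univ _, Finset.mem_image_of_mem _ (Finset.mem_univ r)⟩
  choose p hp using hp
  refine Or.inr ⟨F.card, fun y => g fun t => f t (y ∘ p t),
    hg.comp fun t => (hf t).comp_reindex (p t), w, w.strictMono, fun u => ?_, ?_⟩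
  · have hu := F.orderEmbOfFin_mem rfl u
    simp only [F, Finset.mem_biUnion, Finset.mem_image, Finset.mem_univ, true_and] at hu
    obtain ⟨t, r, hr⟩ := hu
    exact hr ▸ hiT t r
  · show g (fun t => f t ((e ∘ w) ∘ p t)) = g x
    congr 1
    funext t
    rw [← hfx t, ← hp t]
    rfl

lemma exists_mem_genSet_realize (hskolem : HasDefSkolem L A) (T : Set ι) {m : ℕ}
    (φ : L.Formula (Fin (m + 1))) {x : Fin m → N} (hx : ∀ t, x t ∈ genSet L A e T)
    (h : ∃ b, φ.Realize (Fin.snoc x b)) : ∃ b ∈ genSet L A e T, φ.Realize (Fin.snoc x b) := by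
  obtain ⟨ψ, hψ⟩ := (Set.empty_definable_iff.2 ⟨φ, rfl⟩).mono (Set.empty_subset A)
  have hφψ : ∀ v, φ.Realize v ↔ ψ.Realize v := fun v => Set.ext_iff.1 hψ v
  obtain ⟨f, hf, hfψ⟩ := hskolem m ψ
  simp only [hφψ] at h ⊢
  exact ⟨f x, hf.mem_genSet hx, hfψ x h⟩

lemma genSet_inter_genSet_subset [Infinite ι] (hind : OrderIndisc L A e)
    (htight : TightProp L A e) {T₀ T₁ : Set ι} (hT : Disjoint T₀ T₁) :
    genSet L A e T₀ ∩ genSet L A e T₁ ⊆ A := by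
  classical
  rintro a ⟨h₀, h₁⟩
  obtain ⟨k, f, hf, i, -, hiT, rfl⟩ := exists_of_mem_genSet h₀
  obtain ⟨l, g, hg, j, -, hjT, hfg⟩ := exists_of_mem_genSet h₁
  let F : Finset ι := Finset.univ.image i ∪ Finset.univ.image j
  let w := F.orderEmbOfFin rfl
  obtain ⟨p, hp⟩ := F.exists_orderEmbOfFin_comp_eq rfl (i := i) fun r =>
    Finset.mem_union_left _ (Finset.mem_image_of_mem _ (Finset.mem_univ r))
  obtain ⟨q, hq⟩ := F.exists_orderEmbOfFin_comp_eq rfl (i := j) fun r =>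
    Finset.mem_union_right _ (Finset.mem_image_of_mem _ (Finset.mem_univ r))
  have hpq : ∀ r r', p r ≠ q r' := fun r r' hrr' => Set.disjoint_left.1 hT (hiT r) <| by
    simpa [← hp, ← hq, hrr'] using hjT r'
  have hfg_all : ∀ u : Fin F.card → ι, StrictMono u → f (e ∘ u ∘ p) = g (e ∘ u ∘ q) := by
    refine fun u hu => (hind.mem_iff_mem
      ((hf.comp_reindex p).definable_setOf_eq (hg.comp_reindex q)) hu w.strictMono).2 ?_
    show f (e ∘ w ∘ p) = g (e ∘ w ∘ q)
    rw [hp, hq, hfg]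
  rw [← hp]
  obtain ⟨z, hz⟩ := Infinite.exists_strictMono_fin ι (F.card + F.card)
  exact hind.apply_mem_of_tight htight (hf.comp_reindex p)
    (hz.comp (Fin.strictMono_castAdd _)) (hz.comp (Fin.strictMono_natAdd _)) w.strictMono
    (fun a b => hz (by simp [Fin.lt_def]; omega))
    (apply_castAdd_eq_apply_natAdd hpq (Φ := fun v => f (e ∘ v)) (Ψ := fun v => g (e ∘ v))
      hfg_all hz)

end GeneratedSubmodel

theorem stmt_14_general {L : Language} {N : Type*} [L.Structure N]
    (S : L.ElementarySubstructure N)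
    {ι : Type*} [LinearOrder ι] [Infinite ι] (e : ι → N)
    (hskolem : HasDefSkolem L (S : Set N))
    (hind : OrderIndisc L (S : Set N) e)
    (htight : TightProp L (S : Set N) e) :
    (∀ T₀ T₁ : Set ι, T₀ ⊆ T₁ →
      genSet L (S : Set N) e T₀ ⊆ genSet L (S : Set N) e T₁ ∧
      (∀ (m : ℕ) (φ : L.Formula (Fin (m + 1))) (x : Fin m → N),
        (∀ t, x t ∈ genSet L (S : Set N) e T₀) →
        (∃ b ∈ genSet L (S : Set N) e T₁, φ.Realize (Fin.snoc x b)) →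
        (∃ b ∈ genSet L (S : Set N) e T₀, φ.Realize (Fin.snoc x b)))) ∧
    (∀ T₀ T₁ : Set ι, Disjoint T₀ T₁ →
      genSet L (S : Set N) e T₀ ∩ genSet L (S : Set N) e T₁ = (S : Set N)) := by
  refine ⟨fun T₀ T₁ hsub => ⟨genSet_mono hsub, ?_⟩, fun T₀ T₁ hT => ?_⟩
  · rintro m φ x hx ⟨b, -, hb⟩
    exact exists_mem_genSet_realize hskolem T₀ φ hx ⟨b, hb⟩
  · exact (genSet_inter_genSet_subset hind htight hT).antisymm
      (Set.subset_inter Set.subset_union_left Set.subset_union_left)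

/-- for tight indiscernibles, the submodels M_T generated by M ∪ T are
monotone and elementary in one another (Tarski–Vaught condition, realization computed
in M*), and disjoint index sets give intersection exactly M. -/
theorem stmt_14 {L : Language} {N : Type*} [L.Structure N]
    (S : L.ElementarySubstructure N)
    {ι : Type*} [LinearOrder ι] [Infinite ι] (e : ι → N)
    (hinj : Function.Injective e) (hdisj : ∀ x : ι, e x ∉ S)
    (hskolem : HasDefSkolem L (S : Set N))
    (hind : OrderIndisc L (S : Set N) e)
    (hgen : GeneratedBy L (S : Set N) e)
    (htight : TightProp L (S : Set N) e) :
    (∀ T₀ T₁ : Set ι, T₀ ⊆ T₁ →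
      genSet L (S : Set N) e T₀ ⊆ genSet L (S : Set N) e T₁ ∧
      (∀ (m : ℕ) (φ : L.Formula (Fin (m + 1))) (x : Fin m → N),
        (∀ t, x t ∈ genSet L (S : Set N) e T₀) →
        (∃ b ∈ genSet L (S : Set N) e T₁, φ.Realize (Fin.snoc x b)) →
        (∃ b ∈ genSet L (S : Set N) e T₀, φ.Realize (Fin.snoc x b)))) ∧
    (∀ T₀ T₁ : Set ι, Disjoint T₀ T₁ →
      genSet L (S : Set N) e T₀ ∩ genSet L (S : Set N) e T₁ = (S : Set N)) :=
  stmt_14_general S e hskolem hind htight
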